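/- arXiv:2212.04383 — 2 statements merged into one kernel-verified Lean document; each statement's English description precedes it below -/
import Mathlib

section
/- Generalized Faulhaber formula at x = 0: for all integers m ≥ 1 and n ≥ 0, Σ_{j=0}^{m−1} P_{f,n}(j) = (1/(n+1)) Σ_{k=0}^{n} C(n+1,k) · C_{f,k} · m^{n+1−k}. -/
/-!
The Appell polynomials of `c` are `n!` times the coefficients of `E_c(t) e^{xt}`, where `E_c` is
the exponential generating function of `c`, and the hypothesis on `P` says
`E_c(t) (e^t - 1) = t E_P(t)`. Multiplying by `e^{xt}` turns this into the difference equation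
`A_{n+1}(x+1) - A_{n+1}(x) = (n+1) P_n(x)` for the Appell polynomials `A` of `c`, and summing it over
`x = 0, …, m-1` telescopes to `A_{n+1}(m) - A_{n+1}(0)`, which is the right-hand side.
-/

noncomputable def appell (c : ℕ → ℝ) (n : ℕ) (x : ℝ) : ℝ :=
  ∑ k ∈ Finset.range (n + 1), (n.choose k : ℝ) * c k * x ^ (n - k)

open Finset PowerSeries
open scoped Nat

namespace Appell

noncomputable def egf (a : ℕ → ℝ) : ℝ⟦X⟧ := PowerSeries.mk fun n ↦ a n / n !

theorem coeff_egf (a : ℕ → ℝ) (n : ℕ) : coeff n (egf a) = a n / n ! := coeff_mk _ _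

theorem coeff_egf_mul (a b : ℕ → ℝ) (n : ℕ) :
    coeff n (egf a * egf b) = (∑ k ∈ range (n + 1), (n.choose k : ℝ) * a k * b (n - k)) / n ! := by
  rw [coeff_mul, Nat.sum_antidiagonal_eq_sum_range_succ_mk, sum_div]
  refine sum_congr rfl fun k hk ↦ ?_
  have hkn : k ≤ n := mem_range_succ_iff.mp hk
  have hchoose : (n.choose k : ℝ) * k ! * (n - k)! = n ! := by
    exact_mod_cast Nat.choose_mul_factorial_mul_factorial hkn
  have hchoose_ne : (n.choose k : ℝ) ≠ 0 := by exact_mod_cast (Nat.choose_pos hkn).ne'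
  rw [coeff_egf, coeff_egf, ← hchoose]
  field_simp

theorem appell_eq_factorial_mul_coeff (c : ℕ → ℝ) (n : ℕ) (x : ℝ) :
    appell c n x = n ! * coeff n (egf c * egf (x ^ ·)) := by
  rw [coeff_egf_mul, mul_div_cancel₀ _ (by positivity), appell]

theorem egf_pow_mul_egf_pow (x y : ℝ) : egf (x ^ ·) * egf (y ^ ·) = egf ((x + y) ^ ·) := by
  ext n
  rw [coeff_egf_mul, coeff_egf, add_pow]
  congr 1
  exact sum_congr rfl fun k _ ↦ by ring

theorem egf_mul_egf_one_sub_one {c P : ℕ → ℝ}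
    (hP : ∀ n : ℕ, ((n : ℝ) + 1) * P n
      = ∑ k ∈ range (n + 1), ((n + 1).choose k : ℝ) * c k) :
    egf c * (egf (fun _ ↦ 1) - 1) = X * egf P := by
  ext (_ | n)
  · rw [coeff_zero_X_mul, mul_sub, mul_one, map_sub, coeff_egf_mul, coeff_egf]
    simp
  · rw [mul_sub, mul_one, map_sub, coeff_egf_mul, coeff_succ_X_mul, coeff_egf, coeff_egf,
      sum_range_succ]
    simp only [mul_one, Nat.choose_self, Nat.cast_one, one_mul]
    rw [← hP, Nat.factorial_succ]
    push_cast
    field_simp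
    ring

theorem appell_add_one_sub_appell {c P : ℕ → ℝ}
    (hP : ∀ n : ℕ, ((n : ℝ) + 1) * P n
      = ∑ k ∈ range (n + 1), ((n + 1).choose k : ℝ) * c k) (n : ℕ) (x : ℝ) :
    appell c (n + 1) (x + 1) - appell c (n + 1) x = (n + 1) * appell P n x := by
  have hgf : egf c * egf ((x + 1) ^ ·) - egf c * egf (x ^ ·) = X * (egf P * egf (x ^ ·)) := by
    rw [← egf_pow_mul_egf_pow x 1]
    simp only [one_pow]
    calc _ = egf c * (egf (fun _ ↦ 1) - 1) * egf (x ^ ·) := by ring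
      _ = _ := by rw [egf_mul_egf_one_sub_one hP, mul_assoc]
  rw [appell_eq_factorial_mul_coeff, appell_eq_factorial_mul_coeff, appell_eq_factorial_mul_coeff,
    ← mul_sub, ← map_sub, hgf, coeff_succ_X_mul, Nat.factorial_succ]
  push_cast
  ring

theorem appell_zero_right (c : ℕ → ℝ) (n : ℕ) : appell c n 0 = c n := by
  rw [appell, sum_eq_single_of_mem n (self_mem_range_succ n) fun k hk hkn ↦ ?_]
  · simp
  · rw [zero_pow (by grind), mul_zero]

theorem appell_succ_sub_appell_zero (c : ℕ → ℝ) (n : ℕ) (x : ℝ) :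
    appell c (n + 1) x - appell c (n + 1) 0
      = ∑ k ∈ range (n + 1), ((n + 1).choose k : ℝ) * c k * x ^ (n + 1 - k) := by
  rw [appell_zero_right, appell, sum_range_succ]
  simp

end Appell

open Appell

theorem statement12_general (c P : ℕ → ℝ)
    (hP : ∀ n : ℕ, ((n : ℝ) + 1) * P n
      = ∑ k ∈ Finset.range (n + 1), ((n + 1).choose k : ℝ) * c k)
    (m : ℕ) (n : ℕ) :
    ∑ j ∈ Finset.range m, appell P n (j : ℝ)
      = (1 / ((n : ℝ) + 1)) *
          ∑ k ∈ Finset.range (n + 1),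
            ((n + 1).choose k : ℝ) * c k * (m : ℝ) ^ (n + 1 - k) := by
  have htelescope : ((n : ℝ) + 1) * ∑ j ∈ range m, appell P n j
      = appell c (n + 1) m - appell c (n + 1) 0 := by
    rw [mul_sum, ← Nat.cast_zero, ← sum_range_sub fun j : ℕ ↦ appell c (n + 1) j]
    refine sum_congr rfl fun j _ ↦ ?_
    rw [Nat.cast_succ, appell_add_one_sub_appell hP]
  rw [← appell_succ_sub_appell_zero, ← htelescope]
  field_simp

/-- generalized Faulhaber formula at `x = 0`:
`∑_{j=0}^{m−1} P_{f,n}(j) = (1/(n+1)) ∑_{k=0}^n (n+1 choose k) C_{f,k} m^{n+1−k}`. -/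
theorem statement12 (c P : ℕ → ℝ)
    (hP : ∀ n : ℕ, ((n : ℝ) + 1) * P n
      = ∑ k ∈ Finset.range (n + 1), ((n + 1).choose k : ℝ) * c k)
    (m : ℕ) (hm : 1 ≤ m) (n : ℕ) :
    ∑ j ∈ Finset.range m, appell P n (j : ℝ)
      = (1 / ((n : ℝ) + 1)) *
          ∑ k ∈ Finset.range (n + 1),
            ((n + 1).choose k : ℝ) * c k * (m : ℝ) ^ (n + 1 - k) :=
  statement12_general c P hP m n
end

section
/- For Re(z) > 1, L(z,f) admits the integral representation L(z,f) = (1/Γ(z)) ∫_0^∞ t^{z−2} e^{(1−n_f)t} e^{−t} f(−t) dt. -/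
/-!
Writing `q = e^{-t}`, the integrand `t^{z-2} e^{(1-n_f)t} e^{-t} f(-t)` equals
`t^{z-1} e^{-n_f t} p_f(-t) / (1 - q) = ∑_{m ≥ 0} t^{z-1} e^{-(n_f+m) t} p_f(-t)`.
Fix `r < ρ` with `1/r < n_f`; the Cauchy bound `|P_k| r^k ≤ C` gives `|p_f(-t)| ≤ C e^{t/r}`.
For each `n > 1/r`, expanding `p_f(-t)` in its Taylor series and integrating termwise gives
`∫ t^{z-1} e^{-nt} p_f(-t) dt = Γ(z) n^{(-z,f)}`, since
`∫ t^{z+k-1} e^{-nt} dt = Γ(z+k) n^{-z-k}` and `Γ(z+k)/Γ(z) = (-1)^k k! C(-z,k)`.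
Both interchanges of sum and integral are dominated convergence; the sum over `m` needs
`Re z > 1`, as `1/(1 - e^{-t}) ~ 1/t` at `0`.
-/

open scoped ENNReal NNReal
open MeasureTheory

/-- The generalized binomial coefficient `C(z,n) = z(z−1)⋯(z−n+1)/n!`. -/
noncomputable def genBinom (z : ℂ) (n : ℕ) : ℂ :=
  (∏ i ∈ Finset.range n, (z - i)) / (n.factorial : ℂ)

/-- `n_f = ⌊1/ρ⌋ + 1`. -/
noncomputable def nIdx (ρ : ℝ≥0∞) : ℕ := ⌊(ρ⁻¹).toReal⌋₊ + 1

/-- `n^{(−z,f)} = n^{−z} ∑_k C(−z,k) P_k n^{−k}`. -/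
noncomputable def pTerm (P : ℕ → ℝ) (n : ℕ) (z : ℂ) : ℂ :=
  (n : ℂ) ^ (-z) * ∑' k : ℕ, genBinom (-z) k * (P k : ℂ) * ((n : ℂ)⁻¹) ^ k

open Set
open scoped Nat

theorem integrableOn_rpow_mul_exp_neg_mul {s c : ℝ} (hs : -1 < s) (hc : 0 < c) :
    IntegrableOn (fun t : ℝ => t ^ s * Real.exp (-(c * t))) (Ioi 0) := by
  simpa [Real.rpow_one] using integrableOn_rpow_mul_exp_neg_mul_rpow hs one_pos hc

theorem inv_one_sub_exp_neg_le {t : ℝ} (ht : 0 < t) : (1 - Real.exp (-t))⁻¹ ≤ 1 + t⁻¹ := by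
  have hexp : Real.exp (-t) ≤ (1 + t)⁻¹ := by
    rw [Real.exp_neg]
    exact inv_anti₀ (by linarith) (by linarith [Real.add_one_le_exp t])
  have hpos : 0 < 1 - Real.exp (-t) := by
    linarith [Real.exp_lt_one_iff.mpr (neg_lt_zero.mpr ht)]
  rw [inv_le_iff_one_le_mul₀ hpos]
  calc (1 : ℝ) = (1 + t⁻¹) * (1 - (1 + t)⁻¹) := by field_simp; ring
    _ ≤ (1 + t⁻¹) * (1 - Real.exp (-t)) := by gcongr

theorem integrableOn_rpow_mul_exp_neg_mul_div_one_sub_exp_neg {a c : ℝ} (ha : 1 < a)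
    (hc : 0 < c) :
    IntegrableOn (fun t : ℝ => t ^ (a - 1) * Real.exp (-(c * t)) / (1 - Real.exp (-t)))
      (Ioi 0) := by
  have hdom : IntegrableOn
      (fun t : ℝ => t ^ (a - 1) * Real.exp (-(c * t)) + t ^ (a - 2) * Real.exp (-(c * t)))
      (Ioi 0) :=
    (integrableOn_rpow_mul_exp_neg_mul (by linarith) hc).add
      (integrableOn_rpow_mul_exp_neg_mul (by linarith) hc)
  refine hdom.mono' ?_ ((ae_restrict_iff' measurableSet_Ioi).mpr (.of_forall fun t ht => ?_))
  · refine ContinuousOn.aestronglyMeasurable (fun t ht => ?_) measurableSet_Ioi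
    have : 1 - Real.exp (-t) ≠ 0 := by
      linarith [Real.exp_lt_one_iff.mpr (neg_lt_zero.mpr (mem_Ioi.mp ht))]
    exact (((Real.continuousAt_rpow_const _ _ (Or.inl (ne_of_gt ht))).mul
      (by fun_prop)).div (by fun_prop) this).continuousWithinAt
  · rw [mem_Ioi] at ht
    have hpos : 0 < 1 - Real.exp (-t) := by
      linarith [Real.exp_lt_one_iff.mpr (neg_lt_zero.mpr ht)]
    have hsplit : t ^ (a - 2) = t ^ (a - 1) * t⁻¹ := by
      rw [show a - 2 = (a - 1) + -1 by ring, Real.rpow_add ht, Real.rpow_neg_one]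
    rw [Real.norm_of_nonneg (by positivity), div_eq_mul_inv, hsplit]
    calc t ^ (a - 1) * Real.exp (-(c * t)) * (1 - Real.exp (-t))⁻¹
        ≤ t ^ (a - 1) * Real.exp (-(c * t)) * (1 + t⁻¹) := by
          gcongr; exact inv_one_sub_exp_neg_le ht
      _ = _ := by ring

theorem measurable_of_hasSum {α : Type*} [MeasurableSpace α] {f : ℕ → α → ℝ} {g : α → ℝ}
    (hf : ∀ k, Measurable (f k)) (hg : ∀ x, HasSum (fun k => f k x) (g x)) : Measurable g :=
  measurable_of_tendsto_metrizable' Filter.atTop (fun _ => Finset.measurable_sum _ fun k _ => hf k)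
    (tendsto_pi_nhds.mpr fun x => (hg x).tendsto_sum_nat)

theorem abs_div_factorial_mul_pow_le {a : ℕ → ℝ} {r C : ℝ} (hr : 0 < r)
    (ha : ∀ k, |a k| * r ^ k ≤ C) (k : ℕ) (s : ℝ) :
    |a k / k ! * s ^ k| ≤ C * ((|s| / r) ^ k / k !) := by
  rw [abs_mul, abs_div, abs_pow, Nat.abs_cast, div_pow,
    show |a k| / k ! * |s| ^ k = |a k| * r ^ k * ((|s| ^ k / r ^ k) / k !) by
      field_simp]
  gcongr
  exact ha k

theorem hasSum_mul_pow_div_factorial (C x : ℝ) :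
    HasSum (fun k : ℕ => C * (x ^ k / k !)) (C * Real.exp x) := by
  rw [Real.exp_eq_exp_ℝ]
  exact (NormedSpace.expSeries_div_hasSum_exp x).mul_left C

theorem abs_le_mul_exp_of_hasSum {a : ℕ → ℝ} {r C s p : ℝ} (hr : 0 < r)
    (ha : ∀ k, |a k| * r ^ k ≤ C) (hp : HasSum (fun k => a k / k ! * s ^ k) p) :
    |p| ≤ C * Real.exp (|s| / r) :=
  hp.norm_le_of_bounded (hasSum_mul_pow_div_factorial C _) fun k =>
    abs_div_factorial_mul_pow_le hr ha k s

theorem genBinom_neg_mul_factorial {z : ℂ} (hz : ∀ m : ℕ, z ≠ -m) (k : ℕ) :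
    genBinom (-z) k * k ! = (-1) ^ k * (Complex.Gamma (z + k) / Complex.Gamma z) := by
  have hasc := ascPochhammer_eval_neg_eq_descPochhammer (R := ℂ) (-z) k
  rw [neg_neg] at hasc
  rw [Complex.Gamma_add_nat_div_Gamma_eq z hz, hasc, ← mul_assoc, ← pow_add, ← two_mul,
    pow_mul, neg_one_sq, one_pow, one_mul, descPochhammer_eval_eq_prod_range, genBinom,
    div_mul_cancel₀ _ (Nat.cast_ne_zero.mpr k.factorial_ne_zero)]

theorem ne_neg_natCast_of_re_pos {z : ℂ} (hz : 0 < z.re) (m : ℕ) : z ≠ -m := by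
  rintro rfl
  rw [Complex.neg_re, Complex.natCast_re] at hz
  linarith [(m.cast_nonneg : (0 : ℝ) ≤ m)]

theorem integral_cpow_mul_exp_neg_mul_mul_neg_pow {z : ℂ} (hz : 0 < z.re) {c : ℝ} (hc : 0 < c)
    (k : ℕ) :
    ∫ t in Ioi (0 : ℝ), (t : ℂ) ^ (z - 1) * Complex.exp (-(c * t)) * (-(t : ℂ)) ^ k
      = (-1) ^ k * ((1 / c) ^ (z + k) * Complex.Gamma (z + k)) := by
  have hzk : 0 < (z + k).re := by rw [Complex.add_re, Complex.natCast_re]; positivity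
  rw [← Complex.integral_cpow_mul_exp_neg_mul_Ioi hzk hc, ← integral_const_mul]
  refine setIntegral_congr_fun measurableSet_Ioi fun t ht => ?_
  have ht0 : (t : ℂ) ≠ 0 := Complex.ofReal_ne_zero.mpr (ne_of_gt ht)
  rw [show z + k - 1 = (z - 1) + k by ring, Complex.cpow_add _ _ ht0, Complex.cpow_natCast,
    neg_pow]
  ring

theorem Gamma_inv_mul_integral_cpow_mul_exp_neg_mul_mul_neg_pow {z : ℂ} (hz : 0 < z.re) {n : ℕ}
    (hn : 0 < n) (k : ℕ) :
    (Complex.Gamma z)⁻¹ *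
        ∫ t in Ioi (0 : ℝ), (t : ℂ) ^ (z - 1) * Complex.exp (-(n * t)) * (-(t : ℂ)) ^ k
      = k ! * genBinom (-z) k * (n : ℂ) ^ (-z) * ((n : ℂ)⁻¹) ^ k := by
  have hn' : (0 : ℝ) < n := Nat.cast_pos.mpr hn
  have hnC : (n : ℂ) ≠ 0 := Nat.cast_ne_zero.mpr hn.ne'
  have hpow : (1 / (n : ℂ)) ^ (z + k) = (n : ℂ) ^ (-z) * ((n : ℂ)⁻¹) ^ k := by
    rw [one_div, Complex.inv_cpow _ _ (by simp [Complex.natCast_arg, Real.pi_ne_zero.symm]),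
      ← Complex.cpow_neg, neg_add, Complex.cpow_add _ _ hnC, Complex.cpow_neg _ (k : ℂ),
      Complex.cpow_natCast, inv_pow]
  have hΓ := Complex.Gamma_ne_zero_of_re_pos hz
  have := integral_cpow_mul_exp_neg_mul_mul_neg_pow hz hn' k
  push_cast at this
  rw [this, hpow, mul_comm (k ! : ℂ), genBinom_neg_mul_factorial (ne_neg_natCast_of_re_pos hz)]
  field_simp

theorem norm_cpow_mul_exp_neg_mul (z : ℂ) (c : ℝ) {t : ℝ} (ht : 0 < t) :
    ‖(t : ℂ) ^ (z - 1) * Complex.exp (-(c * t))‖ = t ^ (z.re - 1) * Real.exp (-(c * t)) := by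
  rw [norm_mul, Complex.norm_cpow_eq_rpow_re_of_pos ht, Complex.norm_exp]
  simp

theorem continuousOn_cpow_mul_exp_neg_mul (z : ℂ) (c : ℂ) :
    ContinuousOn (fun t : ℝ => (t : ℂ) ^ (z - 1) * Complex.exp (-(c * t))) (Ioi 0) :=
  fun t ht => ((Complex.continuousAt_ofReal_cpow_const t _ (Or.inr (ne_of_gt ht))).mul
    (by fun_prop)).continuousWithinAt

theorem hasSum_integral_cpow_mul_exp_neg_mul_of_hasSum {P : ℕ → ℝ} {pf : ℝ → ℝ}
    (hpf : ∀ t, HasSum (fun k => P k / k ! * t ^ k) (pf t)) {r C : ℝ} (hr : 0 < r)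
    (hP : ∀ k, |P k| * r ^ k ≤ C) {z : ℂ} (hz : 0 < z.re) {c : ℝ} (hc : r⁻¹ < c) :
    HasSum (fun k => ∫ t in Ioi (0 : ℝ),
        (t : ℂ) ^ (z - 1) * Complex.exp (-(c * t)) * ((P k / k ! * (-t) ^ k : ℝ) : ℂ))
      (∫ t in Ioi (0 : ℝ), (t : ℂ) ^ (z - 1) * Complex.exp (-(c * t)) * (pf (-t) : ℂ)) := by
  set bound : ℕ → ℝ → ℝ := fun k t =>
    t ^ (z.re - 1) * Real.exp (-(c * t)) * (C * ((t / r) ^ k / k !))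
  have hbound_sum (t : ℝ) :
      HasSum (fun k => bound k t) (C * (t ^ (z.re - 1) * Real.exp (-((c - r⁻¹) * t)))) := by
    rw [show C * (t ^ (z.re - 1) * Real.exp (-((c - r⁻¹) * t)))
        = t ^ (z.re - 1) * Real.exp (-(c * t)) * (C * Real.exp (t / r)) by
      rw [show -((c - r⁻¹) * t) = -(c * t) + t / r by ring, Real.exp_add]; ring]
    exact (hasSum_mul_pow_div_factorial C (t / r)).mul_left _
  have hnorm_le (k : ℕ) (t : ℝ) (ht : 0 < t) : ‖(t : ℂ) ^ (z - 1) * Complex.exp (-(c * t)) *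
      ((P k / k ! * (-t) ^ k : ℝ) : ℂ)‖ ≤ bound k t := by
    have hcoeff := abs_div_factorial_mul_pow_le hr hP k (-t)
    rw [abs_neg, abs_of_pos ht] at hcoeff
    rw [norm_mul, norm_cpow_mul_exp_neg_mul z c ht, Complex.norm_real, Real.norm_eq_abs]
    exact mul_le_mul_of_nonneg_left hcoeff (by positivity)
  refine hasSum_integral_of_dominated_convergence bound (fun k => ?_)
    (fun k => (ae_restrict_iff' measurableSet_Ioi).mpr (.of_forall (hnorm_le k)))
    (.of_forall fun t => (hbound_sum t).summable) ?_
    (.of_forall fun t => (Complex.hasSum_ofReal.mpr (hpf (-t))).mul_left _)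
  · exact ((continuousOn_cpow_mul_exp_neg_mul z c).mul (by fun_prop)).aestronglyMeasurable
      measurableSet_Ioi
  · simp only [fun t => (hbound_sum t).tsum_eq]
    exact (integrableOn_rpow_mul_exp_neg_mul (by linarith) (sub_pos.mpr hc)).const_mul C

theorem pTerm_eq_Gamma_inv_mul_integral {P : ℕ → ℝ} {pf : ℝ → ℝ}
    (hpf : ∀ t, HasSum (fun k => P k / k ! * t ^ k) (pf t)) {r C : ℝ} (hr : 0 < r)
    (hP : ∀ k, |P k| * r ^ k ≤ C) {z : ℂ} (hz : 0 < z.re) {n : ℕ} (hn : r⁻¹ < n) :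
    pTerm P n z = (Complex.Gamma z)⁻¹ *
      ∫ t in Ioi (0 : ℝ), (t : ℂ) ^ (z - 1) * Complex.exp (-(n * t)) * (pf (-t) : ℂ) := by
  have hn0 : 0 < n := by exact_mod_cast (inv_pos.mpr hr).trans hn
  have hsum := hasSum_integral_cpow_mul_exp_neg_mul_of_hasSum hpf hr hP hz hn
  push_cast at hsum
  rw [pTerm, ← hsum.tsum_eq, ← tsum_mul_left, ← tsum_mul_left]
  refine tsum_congr fun k => ?_
  have hterm (t : ℝ) : (t : ℂ) ^ (z - 1) * Complex.exp (-(n * t)) * (P k / k ! * (-t) ^ k)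
      = (P k / k ! : ℂ) * ((t : ℂ) ^ (z - 1) * Complex.exp (-(n * t)) * (-(t : ℂ)) ^ k) := by
    ring
  have hfac : (k ! : ℂ) ≠ 0 := Nat.cast_ne_zero.mpr k.factorial_ne_zero
  rw [integral_congr_ae (.of_forall hterm), integral_const_mul, mul_left_comm (Complex.Gamma z)⁻¹,
    Gamma_inv_mul_integral_cpow_mul_exp_neg_mul_mul_neg_pow hz hn0 k]
  field_simp

theorem hasSum_cpow_mul_exp_neg_nat_add_mul {fval pf : ℝ → ℝ}
    (hf : ∀ t : ℝ, t ≠ 0 → fval t = t / (Real.exp t - 1) * pf t) (z : ℂ) (N : ℕ) {t : ℝ}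
    (ht : 0 < t) :
    HasSum (fun m : ℕ => (t : ℂ) ^ (z - 1) * Complex.exp (-((N + m : ℕ) * t)) * (pf (-t) : ℂ))
      ((t : ℂ) ^ (z - 2) * Complex.exp ((1 - (N : ℂ)) * t) *
        ((Real.exp (-t) * fval (-t) : ℝ) : ℂ)) := by
  set q : ℂ := Complex.exp (-t)
  have hq : ‖q‖ < 1 := by
    rw [Complex.norm_exp]
    simpa using ht
  have hq1 : 1 - q ≠ 0 := sub_ne_zero.mpr fun h => by simp [← h] at hq
  have ht0 : (t : ℂ) ≠ 0 := Complex.ofReal_ne_zero.mpr ht.ne'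
  have hterm : ∀ m : ℕ, Complex.exp (-((N + m : ℕ) * t)) = Complex.exp (-(N * t)) * q ^ m := by
    intro m
    rw [← Complex.exp_nat_mul, ← Complex.exp_add]
    push_cast
    ring_nf
  have hsum : (t : ℂ) ^ (z - 1) * Complex.exp (-(N * t)) * (pf (-t) : ℂ) * (1 - q)⁻¹ =
      (t : ℂ) ^ (z - 2) * Complex.exp ((1 - (N : ℂ)) * t) *
        ((Real.exp (-t) * fval (-t) : ℝ) : ℂ) := by
    have hexp : Complex.exp ((1 - (N : ℂ)) * t) * q = Complex.exp (-(N * t)) := by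
      rw [← Complex.exp_add]; ring_nf
    rw [hf (-t) (neg_ne_zero.mpr ht.ne'), show z - 1 = (z - 2) + 1 by ring,
      Complex.cpow_add _ _ ht0, Complex.cpow_one, ← hexp]
    push_cast
    rw [show Complex.exp (-(t : ℂ)) = q from rfl]
    have : q - 1 ≠ 0 := fun h => hq1 (by linear_combination -h)
    field_simp
    ring
  rw [← hsum]
  exact ((hasSum_geometric_of_norm_lt_one hq).mul_left _).congr_fun fun m => by rw [hterm]; ring

theorem hasSum_integral_cpow_mul_exp_neg_nat_add_mul {fval pf : ℝ → ℝ} (hpf : Measurable pf)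
    {b C : ℝ} (hpf_le : ∀ t : ℝ, 0 < t → |pf (-t)| ≤ C * Real.exp (b * t))
    (hf : ∀ t : ℝ, t ≠ 0 → fval t = t / (Real.exp t - 1) * pf t) {z : ℂ} (hz : 1 < z.re)
    {N : ℕ} (hN : b < N) :
    HasSum (fun m : ℕ => ∫ t in Ioi (0 : ℝ),
        (t : ℂ) ^ (z - 1) * Complex.exp (-((N + m : ℕ) * t)) * (pf (-t) : ℂ))
      (∫ t in Ioi (0 : ℝ), (t : ℂ) ^ (z - 2) * Complex.exp ((1 - (N : ℂ)) * t) *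
        ((Real.exp (-t) * fval (-t) : ℝ) : ℂ)) := by
  set bound : ℕ → ℝ → ℝ := fun m t =>
    C * (t ^ (z.re - 1) * Real.exp (-((N - b) * t))) * Real.exp (-t) ^ m
  have hbound_sum : ∀ t : ℝ, 0 < t → HasSum (fun m => bound m t)
      (C * (t ^ (z.re - 1) * Real.exp (-((N - b) * t)) / (1 - Real.exp (-t)))) := by
    intro t ht
    rw [mul_div_assoc', div_eq_mul_inv]
    exact (hasSum_geometric_of_lt_one (Real.exp_pos _).le
      (Real.exp_lt_one_iff.mpr (neg_lt_zero.mpr ht))).mul_left _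
  have hnorm_le : ∀ m : ℕ, ∀ t : ℝ, 0 < t → ‖(t : ℂ) ^ (z - 1) *
      Complex.exp (-((N + m : ℕ) * t)) * (pf (-t) : ℂ)‖ ≤ bound m t := by
    intro m t ht
    have := norm_cpow_mul_exp_neg_mul z (N + m : ℕ) ht
    push_cast at this
    push_cast
    rw [norm_mul, this, Complex.norm_real, Real.norm_eq_abs]
    calc t ^ (z.re - 1) * Real.exp (-((N + m) * t)) * |pf (-t)|
        ≤ t ^ (z.re - 1) * Real.exp (-((N + m) * t)) * (C * Real.exp (b * t)) := by
          gcongr; exact hpf_le t ht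
      _ = bound m t := by
          simp only [bound, ← Real.exp_nat_mul]
          rw [show -((N + m) * t) = -((N - b) * t) + m * -t - b * t by ring, Real.exp_sub,
            Real.exp_add]
          field_simp
  refine hasSum_integral_of_dominated_convergence bound (fun m => ?_)
    (fun m => (ae_restrict_iff' measurableSet_Ioi).mpr (.of_forall (hnorm_le m)))
    ((ae_restrict_iff' measurableSet_Ioi).mpr (.of_forall fun t ht => (hbound_sum t ht).summable))
    ?_ ((ae_restrict_iff' measurableSet_Ioi).mpr
      (.of_forall fun t ht => hasSum_cpow_mul_exp_neg_nat_add_mul hf z N ht))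
  · exact ((continuousOn_cpow_mul_exp_neg_mul z _).aestronglyMeasurable measurableSet_Ioi).mul
      (Complex.measurable_ofReal.comp (hpf.comp measurable_neg)).aestronglyMeasurable
  · exact IntegrableOn.congr_fun ((integrableOn_rpow_mul_exp_neg_mul_div_one_sub_exp_neg hz
      (sub_pos.mpr hN)).const_mul C) (fun t ht => (hbound_sum t ht).tsum_eq.symm)
      measurableSet_Ioi

theorem exists_inv_lt_nIdx_ofReal_lt {ρ : ℝ≥0∞} (hρ : 0 < ρ) :
    ∃ r : ℝ, 0 < r ∧ r⁻¹ < nIdx ρ ∧ ENNReal.ofReal r < ρ := by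
  have hinv : ρ⁻¹ < nIdx ρ := by
    rw [← ENNReal.ofReal_toReal (ENNReal.inv_ne_top.mpr hρ.ne'), ← ENNReal.ofReal_natCast]
    refine (ENNReal.ofReal_lt_ofReal_iff (Nat.cast_pos.mpr (Nat.succ_pos _))).mpr ?_
    rw [Nat.cast_add_one]
    exact Nat.lt_floor_add_one _
  obtain ⟨u, hNu, huρ⟩ := exists_between (ENNReal.inv_lt_iff_inv_lt.mp hinv)
  have hu : u ≠ ⊤ := huρ.ne_top
  refine ⟨u.toReal, ENNReal.toReal_pos (pos_of_gt hNu).ne' hu, ?_,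
    by rwa [ENNReal.ofReal_toReal hu]⟩
  rw [← ENNReal.toReal_inv, ← ENNReal.toReal_natCast]
  exact ENNReal.toReal_strict_mono (ENNReal.natCast_ne_top _) (ENNReal.inv_lt_iff_inv_lt.mp hNu)

theorem exists_abs_mul_pow_le {P : ℕ → ℝ} {ρ : ℝ≥0∞} (hρ : 0 < ρ)
    (h1 : ∀ w : ℂ, (‖w‖₊ : ℝ≥0∞) < ρ → Summable (fun n : ℕ => (P n : ℂ) * w ^ n)) :
    ∃ r C : ℝ, 0 < r ∧ r⁻¹ < nIdx ρ ∧ ∀ k, |P k| * r ^ k ≤ C := by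
  obtain ⟨r, hr, hrN, hrρ⟩ := exists_inv_lt_nIdx_ofReal_lt hρ
  have hsum := (h1 r (by rwa [Complex.nnnorm_real, ← enorm_eq_nnnorm,
    Real.enorm_eq_ofReal hr.le])).norm
  simp only [norm_mul, norm_pow, Complex.norm_real, Real.norm_eq_abs, abs_of_pos hr] at hsum
  exact ⟨r, _, hr, hrN, fun k => hsum.le_tsum k fun _ _ => by positivity⟩

theorem statement18_general (P : ℕ → ℝ) (ρ : ℝ≥0∞) (hρ : 0 < ρ)
    (h1 : ∀ w : ℂ, (‖w‖₊ : ℝ≥0∞) < ρ → Summable (fun n : ℕ => (P n : ℂ) * w ^ n))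
    (fval pfval : ℝ → ℝ)
    (hpf : ∀ t : ℝ, HasSum (fun n : ℕ => P n / n.factorial * t ^ n) (pfval t))
    (hf : ∀ t : ℝ, t ≠ 0 → fval t = t / (Real.exp t - 1) * pfval t)
    (z : ℂ) (hz : 1 < z.re) :
    ∑' n : ℕ, pTerm P (nIdx ρ + n) z
      = (Complex.Gamma z)⁻¹ *
          ∫ t in Set.Ioi (0 : ℝ),
            (t : ℂ) ^ (z - 2) * Complex.exp ((1 - (nIdx ρ : ℂ)) * t) *
              ((Real.exp (-t) * fval (-t) : ℝ) : ℂ) := by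
  obtain ⟨r, C, hr, hrN, hP⟩ := exists_abs_mul_pow_le hρ h1
  have hpf_le (t : ℝ) (ht : 0 < t) : |pfval (-t)| ≤ C * Real.exp (r⁻¹ * t) := by
    simpa [abs_neg, abs_of_pos ht, div_eq_inv_mul] using
      abs_le_mul_exp_of_hasSum hr hP (hpf (-t))
  have hpf_meas : Measurable pfval :=
    measurable_of_hasSum (fun k => by fun_prop) hpf
  calc ∑' m : ℕ, pTerm P (nIdx ρ + m) z
      = ∑' m : ℕ, (Complex.Gamma z)⁻¹ * ∫ t in Ioi (0 : ℝ), (t : ℂ) ^ (z - 1) *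
          Complex.exp (-((nIdx ρ + m : ℕ) * t)) * (pfval (-t) : ℂ) :=
        tsum_congr fun m => pTerm_eq_Gamma_inv_mul_integral hpf hr hP (by linarith)
          (hrN.trans_le (by simp))
    _ = _ := ((hasSum_integral_cpow_mul_exp_neg_nat_add_mul hpf_meas hpf_le hf hz
        hrN).mul_left _).tsum_eq

/-- for `Re z > 1`,
`L(z,f) = (1/Γ(z)) ∫_0^∞ t^{z−2} e^{(1−n_f)t} e^{−t} f(−t) dt`, where
`L(z,f) = ∑_{n ≥ n_f} n^{(−z,f)}`, `p_f(t) = ∑ P_n/n! t^n` is entire (with `∑ P_n s^n`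
of radius of convergence `ρ > 0`, `n_f = ⌊1/ρ⌋ + 1`), and `f(t) = (t/(e^t−1)) p_f(t)`. -/
theorem statement18 (P : ℕ → ℝ) (ρ : ℝ≥0∞) (hρ : 0 < ρ)
    (h1 : ∀ w : ℂ, (‖w‖₊ : ℝ≥0∞) < ρ → Summable (fun n : ℕ => (P n : ℂ) * w ^ n))
    (h2 : ∀ w : ℂ, ρ < (‖w‖₊ : ℝ≥0∞) → ¬ Summable (fun n : ℕ => (P n : ℂ) * w ^ n))
    (fval pfval : ℝ → ℝ)
    (hpf : ∀ t : ℝ, HasSum (fun n : ℕ => P n / n.factorial * t ^ n) (pfval t))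
    (hf : ∀ t : ℝ, t ≠ 0 → fval t = t / (Real.exp t - 1) * pfval t)
    (z : ℂ) (hz : 1 < z.re) :
    ∑' n : ℕ, pTerm P (nIdx ρ + n) z
      = (Complex.Gamma z)⁻¹ *
          ∫ t in Set.Ioi (0 : ℝ),
            (t : ℂ) ^ (z - 2) * Complex.exp ((1 - (nIdx ρ : ℂ)) * t) *
              ((Real.exp (-t) * fval (-t) : ℝ) : ℂ) :=
  statement18_general P ρ hρ h1 fval pfval hpf hf z hz
end
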